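/- arXiv:math/0606170 — 2 statements merged into one kernel-verified Lean document; each statement's English description precedes it below -/
import Mathlib

section
/- Let n ≥ 1 and let σ be a noncrossing permutation of Fin n. Then ℓ(σ) + ℓ(σ⁻¹ * s) = n − 1, where s is the n-cycle i ↦ i + 1 (mod n); that is, every noncrossing permutation lies on a geodesic from the identity to s in the Cayley graph of the symmetric group generated by all transpositions. -/
/-- Minimal number of transpositions whose product is `σ` (0 for the identity);
this is the graph distance from the identity to `σ` in the Cayley graph of the
symmetric group on `Fin n` generated by all transpositions. -/
noncomputable def swapLength (n : ℕ) (σ : Equiv.Perm (Fin n)) : ℕ :=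
  sInf {k | ∃ l : List (Equiv.Perm (Fin n)),
    l.length = k ∧ (∀ t ∈ l, t.IsSwap) ∧ l.prod = σ}

/-- A permutation of `Fin n` is noncrossing if (i) its orbits form a noncrossing
partition and (ii) each cycle of `σ` is written in numerically increasing order:
`σ i` is the least element of the orbit of `i` strictly greater than `i` when such
an element exists, and otherwise the least element of the orbit of `i`. -/
def IsNoncrossingPerm {n : ℕ} (σ : Equiv.Perm (Fin n)) : Prop :=
  (∀ i j k l : Fin n, i < j → j < k → k < l →
      σ.SameCycle i k → σ.SameCycle j l → σ.SameCycle i j) ∧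
  (∀ i : Fin n,
    ((∃ j, σ.SameCycle i j ∧ i < j) →
        IsLeast {j | σ.SameCycle i j ∧ i < j} (σ i)) ∧
    (¬ (∃ j, σ.SameCycle i j ∧ i < j) →
        IsLeast {j | σ.SameCycle i j} (σ i)))

/-!
A product of `k` transpositions of `Fin n` has at least `n - k` orbits, because multiplying by a
transposition `(a b)` splits the orbit of `a` when `b` lies on it and merges the orbits of `a`
and `b` otherwise; factoring cycle by cycle attains the bound. Hence `ℓ(π) = n - c(π)`, where
`c(π)` counts orbits, and the claim becomes `c(σ) + c(σ⁻¹ s) = n + 1`. For `σ ≠ 1` noncrossing,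
take `i < j` on a common cycle with `j - i` minimal; then `σ i = j` and `σ` fixes every point
strictly between them. Removing `i` from its cycle, `σ' = (i j) σ` is noncrossing with one more
orbit, while `σ'⁻¹ s = (σ⁻¹ i, i) σ⁻¹ s`, and the orbit of `i` under `σ⁻¹ s` is trapped in
`[i, j)`, which `σ⁻¹ i` avoids: the transposition merges two orbits. Induction on the support.
-/

open Equiv Equiv.Perm Finset

namespace Equiv.Perm

section SameCycle

variable {α : Type*} [Finite α] {f g : Perm α} {x y : α}

theorem SameCycle.induction_on {p : α → Prop} (h : f.SameCycle x y) (hx : p x)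
    (step : ∀ z, f.SameCycle x z → p z → p (f z)) : p y := by
  obtain ⟨k, rfl⟩ := h.exists_nat_pow_eq
  clear h
  induction k with
  | zero => exact hx
  | succ k ih =>
    rw [pow_succ', mul_apply]
    exact step _ (SameCycle.refl f x).pow_right ih

theorem sameCycle_iff_of_forall_sameCycle_apply_eq (h : ∀ z, f.SameCycle x z → g z = f z) :
    g.SameCycle x y ↔ f.SameCycle x y := by
  refine ⟨fun hg => hg.induction_on SameCycle.rfl fun z _ hz => ?_,
    fun hf => hf.induction_on SameCycle.rfl fun z hz hgz => ?_⟩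
  · rw [h z hz]
    exact hz.apply_right
  · rw [← h z hz]
    exact hgz.apply_right

end SameCycle

section Swap

variable {α : Type*} [DecidableEq α] [Finite α] {f : Perm α} {a b i x y : α}

theorem sameCycle_swap_mul_or_iff :
    (swap a b * f).SameCycle a y ∨ (swap a b * f).SameCycle b y ↔
      f.SameCycle a y ∨ f.SameCycle b y := by
  suffices key : ∀ g : Perm α, (swap a b * g).SameCycle a y ∨ (swap a b * g).SameCycle b y →
      g.SameCycle a y ∨ g.SameCycle b y from
    ⟨key f, fun h => key _ (by rwa [swap_mul_self_mul])⟩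
  intro g hy
  have step : ∀ z, g.SameCycle a z ∨ g.SameCycle b z →
      g.SameCycle a ((swap a b * g) z) ∨ g.SameCycle b ((swap a b * g) z) := by
    intro z hz
    rw [mul_apply, swap_apply_def]
    split_ifs
    · exact Or.inr SameCycle.rfl
    · exact Or.inl SameCycle.rfl
    · exact hz.imp SameCycle.apply_right SameCycle.apply_right
  rcases hy with hy | hy
  · exact hy.induction_on (Or.inl SameCycle.rfl) fun z _ => step z
  · exact hy.induction_on (Or.inr SameCycle.rfl) fun z _ => step z

theorem sameCycle_swap_mul_iff_of_not_sameCycle (ha : ¬f.SameCycle a x)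
    (hb : ¬f.SameCycle b x) : (swap a b * f).SameCycle x y ↔ f.SameCycle x y :=
  sameCycle_iff_of_forall_sameCycle_apply_eq fun _ hz =>
    swap_apply_of_ne_of_ne (fun h => ha (h ▸ hz.apply_right).symm)
      (fun h => hb (h ▸ hz.apply_right).symm)

theorem sameCycle_swap_mul_of_not_sameCycle (h : ¬f.SameCycle a b) :
    (swap a b * f).SameCycle a b := by
  by_contra hg
  -- the `swap a b * f`-preimage `f⁻¹ b` of `a` never leaves the `f`-cycle of `a`
  have hpre : (swap a b * f)⁻¹ a = f⁻¹ b := by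
    rw [mul_inv_rev, swap_inv, mul_apply, swap_apply_left]
  have hcyc : (swap a b * f).SameCycle a (f⁻¹ b) := hpre ▸ ⟨-1, by simp⟩
  refine h (sameCycle_symm_apply_right.1 (hcyc.induction_on SameCycle.rfl fun z hz hfz => ?_))
  rw [mul_apply, swap_apply_def]
  split_ifs with hza
  · exact absurd (by simpa [hza] using hz.apply_right) hg
  · exact SameCycle.rfl
  · exact hfz.apply_right

theorem not_sameCycle_swap_mul_of_sameCycle (hab : a ≠ b) (h : f.SameCycle a b) :
    ¬(swap a b * f).SameCycle a b := by
  obtain ⟨k, hk, hmin⟩ : ∃ k, (f ^ k) a = b ∧ ∀ m < k, (f ^ m) a ≠ b :=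
    have hex := h.exists_nat_pow_eq
    ⟨Nat.find hex, Nat.find_spec hex, fun _ => Nat.find_min hex⟩
  have hk0 : 0 < k := Nat.pos_of_ne_zero fun h0 => hab (by rw [← hk, h0, pow_zero, one_apply])
  -- the cycle of `a` under `swap a b * f` is `a, f a, …, f^(k-1) a`, which misses `b`
  intro hg
  obtain ⟨i, hi, hib⟩ : ∃ i < k, (f ^ i) a = b := by
    refine hg.induction_on (p := fun z => ∃ i < k, (f ^ i) a = z) ⟨0, hk0, rfl⟩ ?_
    rintro _ - ⟨i, hi, rfl⟩
    rw [mul_apply, ← mul_apply f, ← pow_succ']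
    rcases (show i + 1 ≤ k from hi).eq_or_lt with hik | hik
    · exact ⟨0, hk0, by rw [hik, hk, swap_apply_right, pow_zero, one_apply]⟩
    · have ha : (f ^ (i + 1)) a ≠ a := fun ha => hmin _ (Nat.sub_lt hk0 i.succ_pos)
        (by rw [← ha, ← mul_apply, pow_sub_mul_pow f hik.le, hk])
      exact ⟨i + 1, hik, by rw [swap_apply_of_ne_of_ne ha (hmin _ hik)]⟩
  exact hmin i hi hib

theorem sameCycle_swap_mul_iff (h : ¬f.SameCycle a b) :
    (swap a b * f).SameCycle x y ↔ f.SameCycle x y ∨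
      (f.SameCycle x a ∧ f.SameCycle y b) ∨ (f.SameCycle x b ∧ f.SameCycle y a) := by
  by_cases hx : f.SameCycle a x ∨ f.SameCycle b x
  · have hU : ∀ z, (swap a b * f).SameCycle a z ↔ f.SameCycle a z ∨ f.SameCycle b z :=
      fun z => ⟨fun hz => sameCycle_swap_mul_or_iff.1 (Or.inl hz), fun hz =>
        (sameCycle_swap_mul_or_iff.2 hz).elim id (sameCycle_swap_mul_of_not_sameCycle h).trans⟩
    have hax := (hU x).2 hx
    rw [show (swap a b * f).SameCycle x y ↔ (swap a b * f).SameCycle a y from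
      ⟨hax.trans, hax.symm.trans⟩, hU y]
    rcases hx with hx | hx
    · have hxb : ¬f.SameCycle x b := fun hxb => h (hx.trans hxb)
      simp only [hx.symm, hxb, sameCycle_comm (x := y), true_and, false_and, or_false]
      exact ⟨fun hy => hy.imp hx.symm.trans id, fun hy => hy.imp hx.trans id⟩
    · have hxa : ¬f.SameCycle x a := fun hxa => h (hx.trans hxa).symm
      simp only [hx.symm, hxa, sameCycle_comm (x := y), true_and, false_and, false_or]
      rw [or_comm]
      exact ⟨fun hy => hy.imp hx.symm.trans id, fun hy => hy.imp hx.trans id⟩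
  · rw [not_or] at hx
    simp only [sameCycle_swap_mul_iff_of_not_sameCycle hx.1 hx.2, sameCycle_comm (x := x),
      hx.1, hx.2, false_and, or_false]

theorem sameCycle_swap_apply_mul_iff (hx : x ≠ i) :
    (swap i (f i) * f).SameCycle x y ↔ f.SameCycle x y ∧ y ≠ i := by
  set g := swap i (f i) * f
  have hfix : g i = i := by rw [mul_apply, swap_apply_right]
  have hxi : ¬g.SameCycle x i := fun h => hx (h.eq_of_right hfix)
  by_cases hi : f i = i
  · have hg : g = f := by simp [g, hi, ← one_def]
    exact ⟨fun h => ⟨hg ▸ h, fun hy => hxi (hy ▸ h)⟩, fun h => hg ▸ h.1⟩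
  have hchar := sameCycle_swap_mul_iff (x := x) (y := y)
    (not_sameCycle_swap_mul_of_sameCycle (Ne.symm hi) (SameCycle.refl f i).apply_right)
  rw [swap_mul_self_mul] at hchar
  refine ⟨fun h => ⟨hchar.2 (Or.inl h), fun hy => hxi (hy ▸ h)⟩, fun ⟨h, hy⟩ => ?_⟩
  rcases hchar.1 h with h | ⟨h, -⟩ | ⟨-, h⟩
  exacts [h, absurd h hxi, absurd (h.eq_of_right hfix) hy]

end Swap

section NumOrbits

variable {α : Type*} [Fintype α] [LinearOrder α] {f g : Perm α} {a b : α}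

-- Orbits, fixed points included, are counted through their least elements.
def numOrbits (f : Perm α) : ℕ := #({x | ∀ y, f.SameCycle x y → x ≤ y} : Finset α)

theorem exists_sameCycle_forall_le (f : Perm α) (x : α) :
    ∃ m, f.SameCycle x m ∧ ∀ y, f.SameCycle m y → m ≤ y := by
  obtain ⟨m, hm, hmin⟩ :=
    exists_min_image ({y | f.SameCycle x y} : Finset α) id ⟨x, by simp [SameCycle.rfl]⟩
  simp only [mem_filter, mem_univ, true_and, id] at hm hmin
  exact ⟨m, hm, fun y hy => hmin y (hm.trans hy)⟩

theorem numOrbits_eq_add_one_of_sameCycle_iff {u v : α} (huv : ¬f.SameCycle u v)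
    (hg : ∀ x y, g.SameCycle x y ↔ f.SameCycle x y ∨
      (f.SameCycle x u ∧ f.SameCycle y v) ∨ (f.SameCycle x v ∧ f.SameCycle y u)) :
    numOrbits f = numOrbits g + 1 := by
  obtain ⟨mu, hmu, hmu_min⟩ := exists_sameCycle_forall_le f u
  obtain ⟨mv, hmv, hmv_min⟩ := exists_sameCycle_forall_le f v
  have hne : mu ≠ mv := fun h => huv (hmu.trans (h ▸ hmv.symm))
  have hmerge : g.SameCycle mu mv := (hg _ _).2 (Or.inr (Or.inl ⟨hmu.symm, hmv.symm⟩))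
  have min_unique : ∀ x x', f.SameCycle x x' → (∀ y, f.SameCycle x y → x ≤ y) →
      (∀ y, f.SameCycle x' y → x' ≤ y) → x = x' :=
    fun x x' h hx hx' => le_antisymm (hx _ h) (hx' _ h.symm)
  -- merging the orbits of `u` and `v` loses exactly the larger of their two minima
  have hmax : max mu mv ∈ ({x | ∀ y, f.SameCycle x y → x ≤ y} : Finset α) := by
    rcases max_choice mu mv with h | h <;> rw [h] <;> simpa
  have key : ({x | ∀ y, g.SameCycle x y → x ≤ y} : Finset α) =
      ({x | ∀ y, f.SameCycle x y → x ≤ y} : Finset α).erase (max mu mv) := by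
    ext x
    simp only [mem_erase, mem_filter, mem_univ, true_and]
    constructor
    · refine fun hx => ⟨?_, fun y hy => hx y ((hg x y).2 (Or.inl hy))⟩
      rintro rfl
      have hgmax : g.SameCycle (max mu mv) mu ∧ g.SameCycle (max mu mv) mv := by
        rcases max_choice mu mv with h | h <;> rw [h]
        exacts [⟨.rfl, hmerge⟩, ⟨hmerge.symm, .rfl⟩]
      exact hne (le_antisymm (le_max_right _ _ |>.trans (hx _ hgmax.1))
        (le_max_left _ _ |>.trans (hx _ hgmax.2)) |>.symm)
    · rintro ⟨hxM, hx⟩ y hy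
      rcases (hg x y).1 hy with h | ⟨hxu, hyv⟩ | ⟨hxv, hyu⟩
      · exact hx y h
      · obtain rfl := min_unique x mu (hxu.trans hmu) hx hmu_min
        exact (le_of_not_gt fun h => hxM (max_eq_left h.le).symm).trans
          (hmv_min y (hmv.symm.trans hyv.symm))
      · obtain rfl := min_unique x mv (hxv.trans hmv) hx hmv_min
        exact (le_of_not_gt fun h => hxM (max_eq_right h.le).symm).trans
          (hmu_min y (hmu.symm.trans hyu.symm))
  rw [numOrbits, numOrbits, key, card_erase_of_mem hmax]
  have := card_pos.2 ⟨_, hmax⟩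
  omega

theorem numOrbits_swap_mul_of_not_sameCycle (h : ¬f.SameCycle a b) :
    numOrbits f = numOrbits (swap a b * f) + 1 :=
  numOrbits_eq_add_one_of_sameCycle_iff h fun _ _ => sameCycle_swap_mul_iff h

theorem numOrbits_swap_mul_of_sameCycle (hab : a ≠ b) (h : f.SameCycle a b) :
    numOrbits (swap a b * f) = numOrbits f + 1 := by
  simpa only [swap_mul_self_mul] using
    numOrbits_swap_mul_of_not_sameCycle (not_sameCycle_swap_mul_of_sameCycle hab h)

@[simp]
theorem numOrbits_one : numOrbits (1 : Perm α) = Fintype.card α := by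
  simp [numOrbits]

theorem card_le_length_add_numOrbits (l : List (Perm α)) (hl : ∀ t ∈ l, t.IsSwap) :
    Fintype.card α ≤ l.length + numOrbits l.prod := by
  induction l with
  | nil => simp
  | cons t l ih =>
    obtain ⟨a, b, hab, rfl⟩ := hl t List.mem_cons_self
    have := ih fun t ht => hl t (List.mem_cons_of_mem _ ht)
    rw [List.prod_cons, List.length_cons]
    by_cases h : l.prod.SameCycle a b
    · have := numOrbits_swap_mul_of_sameCycle hab h
      omega
    · have := numOrbits_swap_mul_of_not_sameCycle h
      omega

theorem exists_isSwap_list_prod_eq (f : Perm α) : ∃ l : List (Perm α),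
    (∀ t ∈ l, t.IsSwap) ∧ l.prod = f ∧ l.length + numOrbits f = Fintype.card α := by
  induction hk : #f.support using Nat.strong_induction_on generalizing f with
  | _ k ih =>
  by_cases h1 : f = 1
  · exact ⟨[], by simp, by simp [h1], by simp [h1]⟩
  obtain ⟨x, hx⟩ : ∃ x, f x ≠ x := not_forall.1 fun h => h1 (Equiv.ext h)
  obtain ⟨l, hl, hprod, hlen⟩ := ih _ (hk ▸ card_support_swap_mul hx) _ rfl
  refine ⟨swap x (f x) :: l, ?_, by rw [List.prod_cons, hprod, swap_mul_self_mul], ?_⟩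
  · exact List.forall_mem_cons.2 ⟨⟨x, f x, hx.symm, rfl⟩, hl⟩
  · have := numOrbits_swap_mul_of_sameCycle hx.symm (SameCycle.refl f x).apply_right
    rw [List.length_cons]
    omega

end NumOrbits

theorem swapLength_add_numOrbits {n : ℕ} (σ : Perm (Fin n)) :
    swapLength n σ + numOrbits σ = n := by
  obtain ⟨l, hl, hprod, hlen⟩ := exists_isSwap_list_prod_eq σ
  rw [Fintype.card_fin] at hlen
  have hleast : IsLeast {k | ∃ l : List (Perm (Fin n)),
      l.length = k ∧ (∀ t ∈ l, t.IsSwap) ∧ l.prod = σ} (n - numOrbits σ) := by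
    refine ⟨⟨l, by omega, hl, hprod⟩, ?_⟩
    rintro k ⟨l', rfl, hl', rfl⟩
    have := card_le_length_add_numOrbits l' hl'
    rw [Fintype.card_fin] at this
    omega
  rw [swapLength, hleast.csInf_eq]
  omega

theorem numOrbits_finRotate {n : ℕ} [NeZero n] : numOrbits (finRotate n) = 1 := by
  rw [numOrbits, card_eq_one]
  refine ⟨0, Finset.ext fun x => ?_⟩
  simp only [mem_filter, mem_univ, true_and, mem_singleton]
  refine ⟨fun hx => ?_, fun hx y _ => hx ▸ Fin.zero_le y⟩
  by_contra h0
  exact ((finRotate_symm_lt_iff_ne_zero x).2 h0).not_ge (hx _ (SameCycle.refl _ x).symm_apply_right)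

theorem mapsTo_inv_mul_finRotate_Ico {n : ℕ} {σ : Perm (Fin n)} {i : Fin n}
    (hi : i < σ i) (hfix : ∀ z, i < z → z < σ i → σ z = z) :
    Set.MapsTo (σ⁻¹ * finRotate n) (Set.Ico i (σ i)) (Set.Ico i (σ i)) := by
  rintro z ⟨hiz, hzj⟩
  obtain ⟨m, rfl⟩ : ∃ m, n = m + 1 := ⟨n - 1, by omega⟩
  have hlast : z ≠ Fin.last m := fun h => (Fin.le_last _).not_gt (h ▸ hzj)
  have hz : z < finRotate (m + 1) z := (lt_finRotate_iff_ne_last z).2 hlast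
  have hz1 : (finRotate (m + 1) z : ℕ) = z + 1 := coe_finRotate_of_ne_last hlast
  rw [mul_apply]
  rcases eq_or_ne (finRotate (m + 1) z) (σ i) with h | h
  · rw [h, inv_eq_iff_eq.2 rfl]
    exact ⟨le_rfl, hi⟩
  · have hlt : finRotate (m + 1) z < σ i := lt_of_le_of_ne (by omega) h
    rw [inv_eq_iff_eq.2 (hfix _ (hiz.trans_lt hz) hlt).symm]
    exact ⟨hiz.trans hz.le, hlt⟩

end Equiv.Perm

namespace IsNoncrossingPerm

variable {n : ℕ} {σ : Perm (Fin n)} {i x y z : Fin n}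

theorem lt_apply (hσ : IsNoncrossingPerm σ) (hy : σ.SameCycle x y) (hxy : x < y) : x < σ x :=
  ((hσ.2 x).1 ⟨y, hy, hxy⟩).1.2

theorem apply_le (hσ : IsNoncrossingPerm σ) (hy : σ.SameCycle x y) (hxy : x < y) : σ x ≤ y :=
  ((hσ.2 x).1 ⟨y, hy, hxy⟩).2 ⟨hy, hxy⟩

theorem apply_eq_self_of_forall_sub_le (hσ : IsNoncrossingPerm σ) {j : Fin n}
    (hij : σ.SameCycle i j)
    (hmin : ∀ u v, u < v → σ.SameCycle u v → (j : ℕ) - i ≤ (v : ℕ) - u)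
    (hiz : i < z) (hzj : z < j) : σ z = z := by
  by_contra hz
  have hzi : ¬σ.SameCycle i z := fun h => by have := hmin i z hiz h; omega
  have hq : σ.SameCycle z (σ z) := (SameCycle.refl σ z).apply_right
  rcases lt_or_ge (σ z) i with hqi | hiq
  · exact hzi ((hσ.1 _ _ _ _ hqi hiz hzj hq.symm hij).symm.trans hq.symm)
  rcases le_or_gt (σ z) j with hqj | hjq
  · rcases lt_or_gt_of_ne hz with h | h
    · have := hmin _ _ h hq.symm
      omega
    · have := hmin _ _ h hq
      omega
  · exact hzi (hσ.1 _ _ _ _ hiz hzj hjq hij hq)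

theorem exists_lt_apply (hσ : IsNoncrossingPerm σ) (h1 : σ ≠ 1) :
    ∃ i, i < σ i ∧ ∀ z, i < z → z < σ i → σ z = z := by
  obtain ⟨x, hx⟩ : ∃ x, σ x ≠ x := not_forall.1 fun h => h1 (Equiv.ext h)
  have hne : ({p | p.1 < p.2 ∧ σ.SameCycle p.1 p.2} : Finset (Fin n × Fin n)).Nonempty := by
    rcases lt_or_gt_of_ne hx with h | h
    · exact ⟨(σ x, x), by simpa [h] using (SameCycle.refl σ x).apply_right.symm⟩
    · exact ⟨(x, σ x), by simpa [h] using (SameCycle.refl σ x).apply_right⟩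
  obtain ⟨⟨i, j⟩, hij, hmin⟩ := exists_min_image _ (fun p => (p.2 : ℕ) - p.1) hne
  simp only [mem_filter, mem_univ, true_and] at hij
  have hmin' : ∀ u v, u < v → σ.SameCycle u v → (j : ℕ) - i ≤ (v : ℕ) - u :=
    fun u v huv h => hmin (u, v) (by simp [huv, h])
  have hσi : σ i = j := by
    have := hmin' i (σ i) (hσ.lt_apply hij.2 hij.1) (SameCycle.refl σ i).apply_right
    have := hσ.apply_le hij.2 hij.1
    omega
  exact ⟨i, hσi ▸ hij.1, fun z hiz hzj =>
    hσ.apply_eq_self_of_forall_sub_le hij.2 hmin' hiz (hσi ▸ hzj)⟩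

theorem swap_apply_mul_increasing (hσ : IsNoncrossingPerm σ) (hi : i < σ i) (hx : x ≠ i) :
    ((∃ y, (swap i (σ i) * σ).SameCycle x y ∧ x < y) →
        IsLeast {y | (swap i (σ i) * σ).SameCycle x y ∧ x < y} ((swap i (σ i) * σ) x)) ∧
    (¬(∃ y, (swap i (σ i) * σ).SameCycle x y ∧ x < y) →
        IsLeast {y | (swap i (σ i) * σ).SameCycle x y} ((swap i (σ i) * σ) x)) := by
  set τ := swap i (σ i) * σ
  have hrel : ∀ y, τ.SameCycle x y ↔ σ.SameCycle x y ∧ y ≠ i :=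
    fun y => sameCycle_swap_apply_mul_iff hx
  have hmem : τ.SameCycle x (τ x) := (SameCycle.refl τ x).apply_right
  have hτx : σ x = i → τ x = σ i := fun h => by
    rw [show τ x = swap i (σ i) (σ x) from rfl, h, swap_apply_left]
  have hτx' : σ x ≠ i → τ x = σ x := fun h =>
    swap_apply_of_ne_of_ne h (σ.injective.ne hx)
  have hle : ∀ y, τ.SameCycle x y → σ x ≤ y → τ x ≤ y := by
    intro y hy hxy
    obtain ⟨hy, hyi⟩ := (hrel y).1 hy
    by_cases h : σ x = i
    · rw [hτx h]
      refine hσ.apply_le ?_ (lt_of_le_of_ne (h ▸ hxy) hyi.symm)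
      exact h ▸ (SameCycle.refl σ x).apply_right.symm.trans hy
    · rwa [hτx' h]
  have hlt : x < σ x → x < τ x := by
    intro hxσ
    by_cases h : σ x = i
    · exact hτx h ▸ hxσ.trans (h ▸ hi)
    · rwa [hτx' h]
  refine ⟨fun ⟨y, hy, hxy⟩ => ?_, fun hne => ?_⟩
  · have hL := (hσ.2 x).1 ⟨y, ((hrel y).1 hy).1, hxy⟩
    exact ⟨⟨hmem, hlt hL.1.2⟩, fun z hz => hle z hz.1 (hL.2 ⟨((hrel z).1 hz.1).1, hz.2⟩)⟩
  · have hL := (hσ.2 x).2 fun hex => hne ⟨τ x, hmem, hlt ((hσ.2 x).1 hex).1.2⟩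
    exact ⟨hmem, fun z hz => hle z hz (hL.2 ((hrel z).1 hz).1)⟩

theorem swap_apply_mul (hσ : IsNoncrossingPerm σ) (hi : i < σ i) :
    IsNoncrossingPerm (swap i (σ i) * σ) := by
  have hfix : (swap i (σ i) * σ) i = i := by rw [mul_apply, swap_apply_right]
  have hne : ∀ {x y}, x < y → (swap i (σ i) * σ).SameCycle x y → x ≠ i :=
    fun hxy h hx => hxy.ne (h.eq_of_left (hx ▸ hfix))
  refine ⟨fun a b c d hab hbc hcd hac hbd => ?_, fun x => ?_⟩
  · have ha := hne (hab.trans hbc) hac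
    have hb := hne (hbc.trans hcd) hbd
    rw [sameCycle_swap_apply_mul_iff ha] at hac ⊢
    rw [sameCycle_swap_apply_mul_iff hb] at hbd
    exact ⟨hσ.1 a b c d hab hbc hcd hac.1 hbd.1, hb⟩
  by_cases hx : x = i
  · subst hx
    refine ⟨fun ⟨y, hy, hxy⟩ => absurd hy (hne hxy · rfl), fun _ => ⟨?_, fun y hy => ?_⟩⟩
    · rw [hfix]; exact SameCycle.rfl
    · rw [hfix, hy.eq_of_left hfix]
  · exact hσ.swap_apply_mul_increasing hi hx

theorem numOrbits_inv_mul_finRotate (hσ : IsNoncrossingPerm σ) (hi : i < σ i)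
    (hfix : ∀ z, i < z → z < σ i → σ z = z) :
    numOrbits (σ⁻¹ * finRotate n) = numOrbits ((swap i (σ i) * σ)⁻¹ * finRotate n) + 1 := by
  have hprod :
      (swap i (σ i) * σ)⁻¹ * finRotate n = swap (σ⁻¹ i) i * (σ⁻¹ * finRotate n) := by
    rw [mul_inv_rev, swap_inv, mul_swap_eq_swap_mul, inv_eq_iff_eq.2 rfl, mul_assoc]
  rw [hprod]
  refine numOrbits_swap_mul_of_not_sameCycle fun h => ?_
  -- the cycle of `i` under `σ⁻¹ * finRotate n` stays in `[i, σ i)`, which `σ⁻¹ i` avoids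
  obtain ⟨hle, hlt⟩ : σ⁻¹ i ∈ Set.Ico i (σ i) :=
    h.symm.induction_on ⟨le_rfl, hi⟩ fun _ _ hz => mapsTo_inv_mul_finRotate_Ico hi hfix hz
  have hne : σ⁻¹ i ≠ i := fun h => hi.ne (by rw [← inv_eq_iff_eq.1 h])
  exact hlt.not_ge
    (hσ.apply_le (sameCycle_symm_apply_right.2 SameCycle.rfl) (lt_of_le_of_ne hle hne.symm))

theorem numOrbits_add_numOrbits_inv_mul_finRotate [NeZero n] (hσ : IsNoncrossingPerm σ) :
    numOrbits σ + numOrbits (σ⁻¹ * finRotate n) = n + 1 := by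
  induction hk : #σ.support using Nat.strong_induction_on generalizing σ with
  | _ k ih =>
  by_cases h1 : σ = 1
  · rw [h1, inv_one, one_mul, numOrbits_one, numOrbits_finRotate, Fintype.card_fin]
  obtain ⟨i, hi, hfix⟩ := hσ.exists_lt_apply h1
  have := ih _ (hk ▸ card_support_swap_mul hi.ne') (hσ.swap_apply_mul hi) rfl
  have := numOrbits_swap_mul_of_sameCycle hi.ne (SameCycle.refl σ i).apply_right
  have := hσ.numOrbits_inv_mul_finRotate hi hfix
  omega

end IsNoncrossingPerm

/-- Every noncrossing permutation lies on a geodesic from the identity to the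
`n`-cycle `s = finRotate n` in the Cayley graph generated by all
transpositions. -/
theorem noncrossing_mem_interval (n : ℕ) (hn : 1 ≤ n) (σ : Equiv.Perm (Fin n))
    (h : IsNoncrossingPerm σ) :
    swapLength n σ + swapLength n (σ⁻¹ * finRotate n) = n - 1 := by
  have : NeZero n := ⟨by omega⟩
  have h₁ := swapLength_add_numOrbits σ
  have h₂ := swapLength_add_numOrbits (σ⁻¹ * finRotate n)
  have h₃ := h.numOrbits_add_numOrbits_inv_mul_finRotate
  omega
end

section
/- Let n ≥ 1 and let σ be a permutation of Fin n satisfying ℓ(σ) + ℓ(σ⁻¹ * s) = n − 1, where s is the n-cycle i ↦ i + 1 (mod n). Then σ is a noncrossing permutation: its orbit partition is noncrossing and each cycle of σ is written in numerically increasing order. -/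
/-!
The reflection length is `ℓ(σ) = n - c(σ)`, where `c` counts cycles (fixed points included):
multiplying by a transposition `(x y)` merges the cycles of `x` and `y` when they differ, and
otherwise only refines the cycles, so `c` drops by at most one. The hypothesis thus reads
`c(σ) + c(σ⁻¹ s) = n + 1`. If `σ ≠ s`, let `x` be moved by `π = σ⁻¹ s` and `y = π x`. Then
`(x y) π` fixes `x` and has one cycle more than `π`, which forces `σ' = σ (x y)` onto the geodesic
with one cycle fewer than `σ`: `x` and `y` lie in different cycles of `σ`, merged by `σ'`.
By induction `σ'` is noncrossing, and `σ` is recovered from it by cutting its increasing cycle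
through `x < y` into the arc `(x, y]` (the cycle of `y`) and the rest (the cycle of `x`).
-/

open Equiv Equiv.Perm Function

theorem Nat.card_eq_card_add_one_of_surjective {A B : Type*} [Finite A] {f : A → B}
    (hf : Surjective f) {p q : A} (hpq : p ≠ q) (hfpq : f p = f q) (hinj : Set.InjOn f {q}ᶜ) :
    Nat.card A = Nat.card B + 1 := by
  classical
  have hbij : Bijective fun a : {a // a ≠ q} => f a := by
    refine ⟨fun a b hab => Subtype.ext (hinj a.2 b.2 hab), fun b => ?_⟩
    obtain ⟨a, rfl⟩ := hf b
    by_cases ha : a = q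
    · exact ⟨⟨p, hpq⟩, ha ▸ hfpq⟩
    · exact ⟨⟨a, ha⟩, rfl⟩
  rw [← Nat.card_eq_of_bijective _ hbij, ← Nat.card_congr (optionSubtypeNe q),
    Finite.card_option]

namespace Equiv.Perm

variable {α : Type*}

theorem sameCycle_self_apply (σ : Perm α) (a : α) : σ.SameCycle a (σ a) :=
  sameCycle_apply_right.2 .rfl

theorem SameCycle.mem_of_mapsTo [Finite α] {σ : Perm α} {s : Set α} (hs : Set.MapsTo σ s s)
    {a b : α} (hab : σ.SameCycle a b) (ha : a ∈ s) : b ∈ s := by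
  obtain ⟨k, rfl⟩ := hab.exists_nat_pow_eq
  rw [← iterate_eq_pow]
  exact hs.iterate k ha

section MulSwap

variable [DecidableEq α] {σ : Perm α} {x y a b : α}

theorem mul_swap_apply_of_ne_of_ne {c : α} (hcx : c ≠ x) (hcy : c ≠ y) :
    (σ * swap x y) c = σ c := by
  simp [swap_apply_of_ne_of_ne hcx hcy]

variable [Finite α]

theorem sameCycle_mul_swap_of_not_sameCycle (h : ¬σ.SameCycle x y) :
    (σ * swap x y).SameCycle x y := by
  by_contra hτ
  have hs : Set.MapsTo σ {c | σ.SameCycle y c ∧ (σ * swap x y).SameCycle x c}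
      {c | σ.SameCycle y c ∧ (σ * swap x y).SameCycle x c} := by
    rintro c ⟨hyc, hxc⟩
    have hcx : c ≠ x := by rintro rfl; exact h hyc.symm
    have hcy : c ≠ y := by rintro rfl; exact hτ hxc
    refine ⟨sameCycle_apply_right.2 hyc, ?_⟩
    rw [← mul_swap_apply_of_ne_of_ne (σ := σ) hcx hcy]
    exact sameCycle_apply_right.2 hxc
  have hσy : σ y = (σ * swap x y) x := by simp
  have hσy_mem : σ y ∈ {c | σ.SameCycle y c ∧ (σ * swap x y).SameCycle x c} :=
    ⟨sameCycle_self_apply σ y, hσy ▸ sameCycle_self_apply _ x⟩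
  exact hτ (SameCycle.mem_of_mapsTo hs (sameCycle_self_apply σ y).symm hσy_mem).2

theorem SameCycle.mul_swap (h : ¬σ.SameCycle x y) (hab : σ.SameCycle a b) :
    (σ * swap x y).SameCycle a b := by
  have hxy := sameCycle_mul_swap_of_not_sameCycle h
  have hstep : ∀ c, (σ * swap x y).SameCycle c (σ c) := by
    intro c
    obtain rfl | hcx := eq_or_ne c x
    · have : σ c = (σ * swap c y) y := by simp
      exact this ▸ hxy.trans (sameCycle_self_apply _ y)
    obtain rfl | hcy := eq_or_ne c y
    · have : σ c = (σ * swap x c) x := by simp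
      exact this ▸ hxy.symm.trans (sameCycle_self_apply _ x)
    exact mul_swap_apply_of_ne_of_ne hcx hcy ▸ sameCycle_self_apply _ c
  exact SameCycle.mem_of_mapsTo (s := {c | (σ * swap x y).SameCycle a c})
    (fun c hc => hc.trans (hstep c)) hab .rfl

theorem SameCycle.of_mul_swap (h : (σ * swap x y).SameCycle a b) :
    σ.SameCycle a b ∨
      (σ.SameCycle a x ∨ σ.SameCycle a y) ∧ (σ.SameCycle b x ∨ σ.SameCycle b y) := by
  refine SameCycle.mem_of_mapsTo (s := {c | σ.SameCycle a c ∨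
      (σ.SameCycle a x ∨ σ.SameCycle a y) ∧ (σ.SameCycle c x ∨ σ.SameCycle c y)})
    (fun c hc => ?_) h (Or.inl .rfl)
  obtain rfl | hcx := eq_or_ne c x
  · have : (σ * swap c y) c = σ y := by simp
    refine Or.inr ⟨hc.elim Or.inl And.left, Or.inr ?_⟩
    rw [this]; exact (sameCycle_self_apply σ y).symm
  obtain rfl | hcy := eq_or_ne c y
  · have : (σ * swap x c) c = σ x := by simp
    refine Or.inr ⟨hc.elim Or.inr And.left, Or.inl ?_⟩
    rw [this]; exact (sameCycle_self_apply σ x).symm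
  show σ.SameCycle a _ ∨ _ ∧ (σ.SameCycle _ x ∨ σ.SameCycle _ y)
  rwa [mul_swap_apply_of_ne_of_ne hcx hcy, sameCycle_apply_right, sameCycle_apply_left,
    sameCycle_apply_left]

theorem SameCycle.of_mul_swap_of_sameCycle (hxy : σ.SameCycle x y)
    (h : (σ * swap x y).SameCycle a b) : σ.SameCycle a b := by
  rcases h.of_mul_swap with h | ⟨ha, hb⟩
  · exact h
  · have hax : σ.SameCycle a x := ha.elim id fun h => h.trans hxy.symm
    have hbx : σ.SameCycle b x := hb.elim id fun h => h.trans hxy.symm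
    exact hax.trans hbx.symm

theorem sameCycle_mul_swap_iff (h : ¬σ.SameCycle x y) :
    (σ * swap x y).SameCycle a b ↔ σ.SameCycle a b ∨
      (σ.SameCycle a x ∨ σ.SameCycle a y) ∧ (σ.SameCycle b x ∨ σ.SameCycle b y) := by
  refine ⟨SameCycle.of_mul_swap, ?_⟩
  have hx : ∀ {c}, σ.SameCycle c x ∨ σ.SameCycle c y → (σ * swap x y).SameCycle c x :=
    fun hc => hc.elim (·.mul_swap h)
      fun hc => (hc.mul_swap h).trans (sameCycle_mul_swap_of_not_sameCycle h).symm
  rintro (hab | ⟨ha, hb⟩)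
  · exact hab.mul_swap h
  · exact (hx ha).trans (hx hb).symm

end MulSwap

/-- Fixed points count as cycles of length one. -/
noncomputable def numCycles (σ : Perm α) : ℕ := Nat.card (Quotient (SameCycle.setoid σ))

theorem numCycles_inv (σ : Perm α) : numCycles σ⁻¹ = numCycles σ := by
  have : SameCycle.setoid σ⁻¹ = SameCycle.setoid σ := Setoid.ext fun _ _ => sameCycle_inv
  rw [numCycles, this, numCycles]

theorem numCycles_one : numCycles (1 : Perm α) = Nat.card α :=
  (Nat.card_eq_of_bijective _
    ⟨fun _ _ h => sameCycle_one.1 (Quotient.exact h), Quotient.mk_surjective⟩).symm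

variable [Finite α]

theorem numCycles_le_card (σ : Perm α) : numCycles σ ≤ Nat.card α :=
  Nat.card_le_card_of_surjective _ Quotient.mk_surjective

theorem numCycles_le_of_forall_sameCycle {σ τ : Perm α}
    (h : ∀ a b, τ.SameCycle a b → σ.SameCycle a b) : numCycles σ ≤ numCycles τ :=
  Nat.card_le_card_of_surjective (Quotient.map id h) fun q =>
    q.inductionOn fun a => ⟨⟦a⟧, rfl⟩

variable [DecidableEq α] {σ : Perm α} {x y : α}

theorem numCycles_le_numCycles_mul_swap (h : σ.SameCycle x y) :
    numCycles σ ≤ numCycles (σ * swap x y) :=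
  numCycles_le_of_forall_sameCycle fun _ _ => h.of_mul_swap_of_sameCycle

theorem numCycles_mul_swap_add_one (h : ¬σ.SameCycle x y) :
    numCycles (σ * swap x y) + 1 = numCycles σ := by
  refine (Nat.card_eq_card_add_one_of_surjective
    (f := Quotient.map id fun _ _ => SameCycle.mul_swap h) (p := ⟦x⟧) (q := ⟦y⟧)
    (fun q => q.inductionOn fun a => ⟨⟦a⟧, rfl⟩) (fun e => h (Quotient.exact e))
    (Quotient.sound (sameCycle_mul_swap_of_not_sameCycle h)) ?_).symm
  rintro ⟨a⟩ ha ⟨b⟩ hb hab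
  have hay : ¬σ.SameCycle a y := fun h => ha (Quotient.sound h)
  have hby : ¬σ.SameCycle b y := fun h => hb (Quotient.sound h)
  refine Quotient.sound ?_
  rcases (Quotient.exact hab : (σ * swap x y).SameCycle a b).of_mul_swap with h | ⟨hax, hbx⟩
  · exact h
  · exact (hax.resolve_right hay).trans (hbx.resolve_right hby).symm

theorem numCycles_le_numCycles_mul_swap_add_one (σ : Perm α) (x y : α) :
    numCycles σ ≤ numCycles (σ * swap x y) + 1 := by
  by_cases h : σ.SameCycle x y
  · exact (numCycles_le_numCycles_mul_swap h).trans (Nat.le_succ _)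
  · exact (numCycles_mul_swap_add_one h).ge

theorem numCycles_swap_mul (hx : σ x ≠ x) :
    numCycles (swap x (σ x) * σ) = numCycles σ + 1 := by
  have hfix : (swap x (σ x) * σ)⁻¹ x = x := by simp
  have hns : ¬(swap x (σ x) * σ)⁻¹.SameCycle x (σ x) := fun h => hx (h.eq_of_left hfix).symm
  have hmerge := numCycles_mul_swap_add_one hns
  rw [show (swap x (σ x) * σ)⁻¹ * swap x (σ x) = σ⁻¹ by simp [mul_assoc], numCycles_inv,
    numCycles_inv] at hmerge
  exact hmerge.symm

theorem numCycles_le_numCycles_mul_prod_add_length (σ : Perm α) {l : List (Perm α)}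
    (hl : ∀ t ∈ l, t.IsSwap) : numCycles σ ≤ numCycles (σ * l.prod) + l.length := by
  induction l generalizing σ with
  | nil => simp
  | cons t l ih =>
    obtain ⟨a, b, -, rfl⟩ := hl t List.mem_cons_self
    have := ih (σ * swap a b) fun t ht => hl t (List.mem_cons_of_mem _ ht)
    have := numCycles_le_numCycles_mul_swap_add_one σ a b
    rw [List.prod_cons, ← mul_assoc, List.length_cons]
    omega

theorem exists_swap_list_length_add_numCycles_le (σ : Perm α) :
    ∃ l : List (Perm α),
      (∀ t ∈ l, t.IsSwap) ∧ l.prod = σ ∧ l.length + numCycles σ ≤ Nat.card α := by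
  by_cases h1 : σ = 1
  · exact ⟨[], by simp, by simp [h1], by simpa using numCycles_le_card σ⟩
  obtain ⟨x, hx⟩ : ∃ x, σ x ≠ x := not_forall.1 fun h => h1 (Perm.ext h)
  have hsplit := numCycles_swap_mul hx
  have := numCycles_le_card (swap x (σ x) * σ)
  obtain ⟨l, hl, hprod, hlen⟩ := exists_swap_list_length_add_numCycles_le (swap x (σ x) * σ)
  refine ⟨swap x (σ x) :: l, List.forall_mem_cons.2 ⟨⟨x, σ x, hx.symm, rfl⟩, hl⟩, ?_, ?_⟩
  · rw [List.prod_cons, hprod, swap_mul_self_mul]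
  · rw [List.length_cons]
    omega
termination_by Nat.card α - numCycles σ

theorem numCycles_add_numCycles_le (σ τ : Perm α) :
    numCycles σ + numCycles τ ≤ Nat.card α + numCycles (σ * τ) := by
  obtain ⟨l, hl, rfl, hlen⟩ := exists_swap_list_length_add_numCycles_le τ
  have := numCycles_le_numCycles_mul_prod_add_length σ hl
  omega

end Equiv.Perm

theorem swapLength_add_numCycles {n : ℕ} (σ : Perm (Fin n)) :
    swapLength n σ + numCycles σ = n := by
  obtain ⟨l, hl, hprod, hlen⟩ := exists_swap_list_length_add_numCycles_le σ
  have hmem : l.length ∈ {k | ∃ l : List (Perm (Fin n)),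
      l.length = k ∧ (∀ t ∈ l, t.IsSwap) ∧ l.prod = σ} := ⟨l, rfl, hl, hprod⟩
  have hup : swapLength n σ ≤ l.length := Nat.sInf_le hmem
  obtain ⟨l', hlen', hl', hprod'⟩ : swapLength n σ ∈ _ := Nat.sInf_mem ⟨_, hmem⟩
  have hlow := numCycles_le_numCycles_mul_prod_add_length 1 hl'
  rw [one_mul, hprod', numCycles_one, hlen'] at hlow
  rw [Nat.card_fin] at hlen hlow
  omega

theorem sameCycle_finRotate {n : ℕ} (i j : Fin n) : (finRotate n).SameCycle i j := by
  obtain _ | m := n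
  · exact i.elim0
  refine ⟨(j - i).val, ?_⟩
  rw [zpow_natCast, ← iterate_eq_pow, ← finCycle_eq_finRotate_iterate, finCycle_apply,
    add_sub_cancel]

theorem numCycles_finRotate {n : ℕ} (hn : 1 ≤ n) : numCycles (finRotate n) = 1 :=
  Nat.card_eq_one_iff_unique.2
    ⟨⟨fun a b => Quotient.inductionOn₂ a b fun i j =>
      Quotient.sound (sameCycle_finRotate i j)⟩, ⟨⟦⟨0, hn⟩⟧⟩⟩

section Noncrossing

variable {n : ℕ}

/-- Going up cyclically in `Fin n` from `i` (exclusive), one meets `v` no later than `j`. -/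
def CyclicLE (i v j : Fin n) : Prop := (i < j → i < v ∧ v ≤ j) ∧ (v ≤ i → v ≤ j)

def HasNoncrossingCycles (σ : Perm (Fin n)) : Prop :=
  ∀ i j k l : Fin n, i < j → j < k → k < l →
    σ.SameCycle i k → σ.SameCycle j l → σ.SameCycle i j

def HasIncreasingCycles (σ : Perm (Fin n)) : Prop :=
  ∀ i j, σ.SameCycle i j → CyclicLE i (σ i) j

theorem isNoncrossingPerm_iff {σ : Perm (Fin n)} :
    IsNoncrossingPerm σ ↔ HasNoncrossingCycles σ ∧ HasIncreasingCycles σ := by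
  refine and_congr_right' (forall_congr' fun i => ⟨fun ⟨habove, hnone⟩ j hij => ⟨?_, ?_⟩, ?_⟩)
  · intro hlt
    have hleast := habove ⟨j, hij, hlt⟩
    exact ⟨hleast.1.2, hleast.2 ⟨hij, hlt⟩⟩
  · intro hle
    by_cases hex : ∃ j, σ.SameCycle i j ∧ i < j
    · exact absurd (habove hex).1.2 (not_lt.2 hle)
    · exact (hnone hex).2 hij
  · intro h
    refine ⟨fun ⟨j, hij, hlt⟩ => ⟨⟨sameCycle_self_apply σ i, ((h j hij).1 hlt).1⟩,
      fun k ⟨hik, hlt'⟩ => ((h k hik).1 hlt').2⟩, fun hex => ?_⟩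
    have hle : σ i ≤ i := not_lt.1 fun hlt => hex ⟨σ i, sameCycle_self_apply σ i, hlt⟩
    exact ⟨sameCycle_self_apply σ i, fun k hik => (h k hik).2 hle⟩

theorem isNoncrossingPerm_finRotate (n : ℕ) : IsNoncrossingPerm (finRotate n) := by
  refine isNoncrossingPerm_iff.2
    ⟨fun i j _ _ _ _ _ _ _ => sameCycle_finRotate i j, fun i j _ => ?_⟩
  obtain _ | m := n
  · exact i.elim0
  by_cases hi : i = Fin.last m
  · subst hi
    rw [finRotate_last]
    exact ⟨fun h => absurd h (not_lt.2 (Fin.le_last j)), fun _ => Fin.zero_le j⟩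
  · have hval := coe_finRotate_of_ne_last hi
    simp only [CyclicLE, Fin.lt_def, Fin.le_def, hval]
    omega

variable {σ : Perm (Fin n)} {x y : Fin n}

theorem HasIncreasingCycles.mem_Ioc_of_sameCycle (hinc : HasIncreasingCycles (σ * swap x y))
    (hxy : x < y) (hns : ¬σ.SameCycle x y) {b : Fin n} (hb : σ.SameCycle y b) :
    b ∈ Set.Ioc x y := by
  refine (SameCycle.mem_of_mapsTo (s := {b | σ.SameCycle y b ∧ b ∈ Set.Ioc x y}) ?_ hb
    ⟨.rfl, hxy, le_rfl⟩).2
  rintro b ⟨hyb, hxb, hby⟩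
  refine ⟨sameCycle_apply_right.2 hyb, ?_⟩
  obtain rfl | hby' := eq_or_ne b y
  · have e : σ b = (σ * swap x b) x := by simp
    rw [e]
    exact (hinc x b (sameCycle_mul_swap_of_not_sameCycle hns)).1 hxb
  · rw [← mul_swap_apply_of_ne_of_ne hxb.ne' hby']
    have hcyc := (hinc b y (hyb.symm.mul_swap hns)).1 (lt_of_le_of_ne hby hby')
    exact ⟨hxb.trans hcyc.1, hcyc.2⟩

theorem HasIncreasingCycles.notMem_Ioc_of_sameCycle
    (hinc : HasIncreasingCycles (σ * swap x y)) (hxy : x < y) (hns : ¬σ.SameCycle x y)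
    {b : Fin n} (hb : σ.SameCycle x b) :
    b ∉ Set.Ioc x y := by
  refine (SameCycle.mem_of_mapsTo (s := {b | σ.SameCycle x b ∧ b ∉ Set.Ioc x y}) ?_ hb
    ⟨.rfl, fun h => lt_irrefl x h.1⟩).2
  rintro b ⟨hxb, hbI⟩
  refine ⟨sameCycle_apply_right.2 hxb, ?_⟩
  obtain rfl | hbx := eq_or_ne b x
  · have e : σ b = (σ * swap b y) y := by simp
    rw [e]
    have hcyc := hinc y b (sameCycle_mul_swap_of_not_sameCycle hns).symm
    rintro ⟨h1, h2⟩
    exact absurd (hcyc.2 h2) (not_le.2 h1)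
  · have hby : b ≠ y := by rintro rfl; exact hbI ⟨hxy, le_rfl⟩
    rw [← mul_swap_apply_of_ne_of_ne hbx hby]
    have hcyc := hinc b x (hxb.symm.mul_swap hns)
    rintro ⟨h1, h2⟩
    simp only [Set.mem_Ioc, not_and, not_le] at hbI
    rcases lt_or_gt_of_ne hbx with hlt | hgt
    · exact absurd (hcyc.1 hlt).2 (not_le.2 h1)
    · exact absurd (hcyc.2 (h2.trans (hbI hgt).le)) (not_le.2 h1)

theorem HasNoncrossingCycles.of_mul_swap (hnc : HasNoncrossingCycles (σ * swap x y))
    (hinc : HasIncreasingCycles (σ * swap x y)) (hxy : x < y) (hns : ¬σ.SameCycle x y) :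
    HasNoncrossingCycles σ := by
  intro i j k l hij hjk hkl hik hjl
  have hin := fun {b} => hinc.mem_Ioc_of_sameCycle hxy hns (b := b)
  have hout := fun {b} => hinc.notMem_Ioc_of_sameCycle hxy hns (b := b)
  have hij' := hnc i j k l hij hjk hkl (hik.mul_swap hns) (hjl.mul_swap hns)
  rcases (sameCycle_mul_swap_iff hns).1 hij' with h | ⟨hi | hi, hj | hj⟩
  · exact h
  · exact hi.trans hj.symm
  · have hj' := hin hj.symm
    have hl' := hin (hj.symm.trans hjl)
    exact absurd ⟨hj'.1.trans hjk, hkl.le.trans hl'.2⟩ (hout (hi.symm.trans hik))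
  · have hi' := hin hi.symm
    have hk' := hin (hi.symm.trans hik)
    exact absurd ⟨hi'.1.trans hij, hjk.le.trans hk'.2⟩ (hout hj.symm)
  · exact hi.trans hj.symm

theorem HasIncreasingCycles.of_mul_swap (hinc : HasIncreasingCycles (σ * swap x y))
    (hxy : x < y) (hns : ¬σ.SameCycle x y) : HasIncreasingCycles σ := by
  intro i j hij
  have hxy' := sameCycle_mul_swap_of_not_sameCycle hns
  obtain rfl | hix := eq_or_ne i x
  · have e : σ i = (σ * swap i y) y := by simp
    rw [e]
    have hy := hinc y j (hxy'.symm.trans (hij.mul_swap hns))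
    have hj := hinc.notMem_Ioc_of_sameCycle hxy hns hij
    refine ⟨fun hlt => ?_, fun hle => hy.2 (hle.trans hxy.le)⟩
    have hyj : y < j := by
      simp only [Set.mem_Ioc, not_and, not_le] at hj
      exact hj hlt
    exact ⟨hxy.trans (hy.1 hyj).1, (hy.1 hyj).2⟩
  obtain rfl | hiy := eq_or_ne i y
  · have e : σ i = (σ * swap x i) x := by simp
    rw [e]
    have hj := hinc.mem_Ioc_of_sameCycle hxy hns hij
    have hx := (hinc x j (hxy'.trans (hij.mul_swap hns))).1 hj.1
    exact ⟨fun hlt => absurd hj.2 (not_le.2 hlt), fun _ => hx.2⟩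
  · rw [← mul_swap_apply_of_ne_of_ne hix hiy]
    exact hinc i j (hij.mul_swap hns)

theorem IsNoncrossingPerm.of_mul_swap (hns : ¬σ.SameCycle x y)
    (h : IsNoncrossingPerm (σ * swap x y)) : IsNoncrossingPerm σ := by
  wlog hxy : x < y generalizing x y
  · have hne : x ≠ y := by rintro rfl; exact hns .rfl
    exact this (fun h' => hns h'.symm) (swap_comm x y ▸ h)
      (lt_of_le_of_ne (not_lt.1 hxy) hne.symm)
  rw [isNoncrossingPerm_iff] at h ⊢
  exact ⟨h.1.of_mul_swap h.2 hxy hns, h.2.of_mul_swap hxy hns⟩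

end Noncrossing

theorem isNoncrossingPerm_of_numCycles_add_numCycles_eq {n : ℕ} (hn : 1 ≤ n)
    (σ : Perm (Fin n)) (h : numCycles σ + numCycles (σ⁻¹ * finRotate n) = n + 1) :
    IsNoncrossingPerm σ := by
  generalize hπ : σ⁻¹ * finRotate n = π at h
  by_cases hπ1 : π = 1
  · rw [← hπ, inv_mul_eq_one] at hπ1
    exact hπ1 ▸ isNoncrossingPerm_finRotate n
  obtain ⟨x, hx⟩ : ∃ x, π x ≠ x := not_forall.1 fun h' => hπ1 (Perm.ext h')
  have hsplit : numCycles (swap x (π x) * π) = numCycles π + 1 := numCycles_swap_mul hx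
  generalize π x = y at hsplit hx
  have hπ' : (σ * swap x y)⁻¹ * finRotate n = swap x y * π := by simp [← hπ, mul_assoc]
  have hgeod := numCycles_add_numCycles_le (σ * swap x y) (swap x y * π)
  rw [show σ * swap x y * (swap x y * π) = finRotate n by simp [← hπ, mul_assoc],
    numCycles_finRotate hn, Nat.card_fin] at hgeod
  have hdrop := numCycles_le_numCycles_mul_swap_add_one σ x y
  have hns : ¬σ.SameCycle x y := fun hxy => by
    have := numCycles_le_numCycles_mul_swap hxy
    omega
  have hmerge := numCycles_mul_swap_add_one hns
  have hgeod' : numCycles (σ * swap x y) + numCycles ((σ * swap x y)⁻¹ * finRotate n) = n + 1 := by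
    rw [hπ']
    omega
  exact (isNoncrossingPerm_of_numCycles_add_numCycles_eq hn _ hgeod').of_mul_swap hns
termination_by numCycles σ
decreasing_by exact hmerge ▸ Nat.lt_succ_self _

/-- Every permutation on a geodesic from the identity to the `n`-cycle
`s = finRotate n` is a noncrossing permutation. -/
theorem mem_interval_noncrossing (n : ℕ) (hn : 1 ≤ n) (σ : Equiv.Perm (Fin n))
    (h : swapLength n σ + swapLength n (σ⁻¹ * finRotate n) = n - 1) :
    IsNoncrossingPerm σ := by
  have hσ := swapLength_add_numCycles σ
  have hπ := swapLength_add_numCycles (σ⁻¹ * finRotate n)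
  exact isNoncrossingPerm_of_numCycles_add_numCycles_eq hn σ (by omega)
end
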